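/- arXiv:1202.5980 — 2 statements merged into one kernel-verified Lean document; each statement's English description precedes it below -/
import Mathlib

section
/- Let T > 0, t₀ ∈ [0, T], x₀ ∈ ℝ^m. Let r : ℝ^m → ℝ^m and q : ℝ^m → ℝ^{m×m} be continuous with q(x) symmetric positive definite for every x, let h : ℝ^m → ℝ, and let Ū : [0,T] × ℝ^m → ℝ be continuously differentiable with ∂_s Ū(s,x) + ⟨r(x), ∇_x Ū(s,x)⟩ − (1/2)⟨∇_x Ū(s,x), q(x)∇_x Ū(s,x)⟩ ≥ 0 on (0,T) × ℝ^m and Ū(T,·) ≤ h. Then for every continuously differentiable path φ : [t₀, T] → ℝ^m with φ(t₀) = x₀, ∫_{t₀}^{T} [ (1/2)⟨φ'(s) − r(φ(s)), q(φ(s))⁻¹ (φ'(s) − r(φ(s)))⟩ − ⟨φ'(s) − r(φ(s)), ∇_x Ū(s, φ(s))⟩ − (1/2)⟨∇_x Ū(s, φ(s)), q(φ(s)) ∇_x Ū(s, φ(s))⟩ ] ds + 2 h(φ(T)) ≥ (1/2)∫_{t₀}^{T} ⟨φ'(s) − r(φ(s)), q(φ(s))⁻¹ (φ'(s) − r(φ(s)))⟩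 ds + h(φ(T)) + Ū(t₀, x₀). -/
/-!
Along `φ`, the subsolution inequality for `Ū` says that the cross terms
`⟪φ' - r(φ), ∇ₓŪ⟫ + ½⟪∇ₓŪ, q(φ) ∇ₓŪ⟫` are bounded by `d/ds Ū(s, φ s)`. Integrating gives
`Ū(T, φ T) - Ū(t₀, x₀) ≤ h(φ T) - Ū(t₀, x₀)` as an upper bound for their integral, which
rearranges to the claim, since the rate-functional term occurs on both sides.
-/

open MeasureTheory
open scoped RealInnerProductSpace

/-- Action of an `m × m` real matrix on a vector of `EuclideanSpace ℝ (Fin m)`. -/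
noncomputable def matVec {m : ℕ} (A : Matrix (Fin m) (Fin m) ℝ)
    (v : EuclideanSpace ℝ (Fin m)) : EuclideanSpace ℝ (Fin m) :=
  (EuclideanSpace.equiv (Fin m) ℝ).symm (A.mulVec (EuclideanSpace.equiv (Fin m) ℝ v))

open Set

theorem Continuous.matrix_inv_of_det_ne_zero {X n : Type*} [TopologicalSpace X] [Fintype n]
    [DecidableEq n] {A : X → Matrix n n ℝ} (hA : Continuous A) (hdet : ∀ x, (A x).det ≠ 0) :
    Continuous fun x => (A x)⁻¹ := by
  simp only [Matrix.inv_def, Ring.inverse_eq_inv]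
  exact (hA.matrix_det.inv₀ hdet).smul hA.matrix_adjugate

theorem continuous_matVec {m : ℕ} :
    Continuous fun p : Matrix (Fin m) (Fin m) ℝ × EuclideanSpace ℝ (Fin m) => matVec p.1 p.2 :=
  (EuclideanSpace.equiv (Fin m) ℝ).symm.continuous.comp
    (continuous_fst.matrix_mulVec ((EuclideanSpace.equiv (Fin m) ℝ).continuous.comp continuous_snd))

theorem ContinuousOn.matVec {X : Type*} [TopologicalSpace X] {m : ℕ}
    {A : X → Matrix (Fin m) (Fin m) ℝ} {v : X → EuclideanSpace ℝ (Fin m)} {s : Set X}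
    (hA : ContinuousOn A s) (hv : ContinuousOn v s) :
    ContinuousOn (fun x => matVec (A x) (v x)) s :=
  continuous_matVec.comp_continuousOn (hA.prodMk hv)

section PartialDerivatives

variable {E : Type*} [NormedAddCommGroup E] [InnerProductSpace ℝ E] [CompleteSpace E]
  {U : ℝ → E → ℝ}

theorem hasGradientAt_of_differentiableAt_uncurry {s : ℝ} {x : E}
    (hU : DifferentiableAt ℝ (fun p : ℝ × E => U p.1 p.2) (s, x)) :
    HasGradientAt (U s) ((InnerProductSpace.toDual ℝ E).symm
      ((fderiv ℝ (fun p : ℝ × E => U p.1 p.2) (s, x)).comp (.inr ℝ ℝ E))) x :=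
  (hU.hasFDerivAt.comp x ((hasFDerivAt_const s x).prodMk (hasFDerivAt_id x))).hasGradientAt

theorem ContDiff.continuous_gradient_uncurry
    (hU : ContDiff ℝ 1 (fun p : ℝ × E => U p.1 p.2)) :
    Continuous fun p : ℝ × E => gradient (U p.1) p.2 := by
  have hgrad : (fun p : ℝ × E => gradient (U p.1) p.2) = fun p =>
      (InnerProductSpace.toDual ℝ E).symm
        ((fderiv ℝ (fun p : ℝ × E => U p.1 p.2) p).comp (.inr ℝ ℝ E)) :=
    funext fun p => (hasGradientAt_of_differentiableAt_uncurry
      ((hU.differentiable one_ne_zero) p)).gradient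
  rw [hgrad]
  exact (InnerProductSpace.toDual ℝ E).symm.continuous.comp
    ((hU.continuous_fderiv one_ne_zero).clm_comp continuous_const)

theorem hasDerivAt_uncurry_comp {φ : ℝ → E} {v : E} {s : ℝ}
    (hU : DifferentiableAt ℝ (fun p : ℝ × E => U p.1 p.2) (s, φ s)) (hφ : HasDerivAt φ v s) :
    HasDerivAt (fun t => U t (φ t))
      (deriv (fun t => U t (φ s)) s + ⟪gradient (U s) (φ s), v⟫) s := by
  set L := fderiv ℝ (fun p : ℝ × E => U p.1 p.2) (s, φ s)
  have htime : HasDerivAt (fun t => U t (φ s)) (L (1, 0)) s :=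
    hU.hasFDerivAt.comp_hasDerivAt_of_eq s ((hasDerivAt_id s).prodMk (hasDerivAt_const s (φ s))) rfl
  have hspace : ⟪gradient (U s) (φ s), v⟫ = L (0, v) := by
    rw [(hasGradientAt_of_differentiableAt_uncurry hU).gradient,
      InnerProductSpace.toDual_symm_apply]
    rfl
  have hsplit : L (1, v) = L (1, 0) + L (0, v) := by
    rw [← map_add, Prod.mk_add_mk, add_zero, zero_add]
  rw [htime.deriv, hspace, ← hsplit]
  exact hU.hasFDerivAt.comp_hasDerivAt_of_eq s ((hasDerivAt_id s).prodMk hφ) rfl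

theorem integral_le_sub_of_le_deriv_uncurry_comp {a b : ℝ} (hab : a ≤ b) {φ φ' : ℝ → E}
    {ψ : ℝ → ℝ} (hU : Differentiable ℝ (fun p : ℝ × E => U p.1 p.2))
    (hφ : ∀ s ∈ Icc a b, HasDerivAt φ (φ' s) s) (hψ : IntegrableOn ψ (Icc a b))
    (hle : ∀ s ∈ Ioo a b,
      ψ s ≤ deriv (fun t => U t (φ s)) s + ⟪gradient (U s) (φ s), φ' s⟫) :
    ∫ s in a..b, ψ s ≤ U b (φ b) - U a (φ a) := by
  have hderiv (s : ℝ) (hs : s ∈ Icc a b) := hasDerivAt_uncurry_comp (hU _) (hφ s hs)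
  exact intervalIntegral.integral_le_sub_of_hasDeriv_right_of_le hab
    (fun s hs => (hderiv s hs).continuousAt.continuousWithinAt)
    (fun s hs => (hderiv s (Ioo_subset_Icc_self hs)).hasDerivWithinAt) hψ hle

end PartialDerivatives

theorem stmt4_general (m : ℕ) (T t₀ : ℝ) (ht₀ : t₀ ∈ Set.Icc 0 T)
    (x₀ : EuclideanSpace ℝ (Fin m))
    (r : EuclideanSpace ℝ (Fin m) → EuclideanSpace ℝ (Fin m)) (hr : Continuous r)
    (q : EuclideanSpace ℝ (Fin m) → Matrix (Fin m) (Fin m) ℝ)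
    (hqc : ∀ i j, Continuous fun x => q x i j) (hqpd : ∀ x, (q x).PosDef)
    (h : EuclideanSpace ℝ (Fin m) → ℝ)
    (U : ℝ → EuclideanSpace ℝ (Fin m) → ℝ)
    (hU : ContDiff ℝ 1 (fun sx : ℝ × EuclideanSpace ℝ (Fin m) => U sx.1 sx.2))
    (hsub : ∀ s ∈ Set.Ioo (0 : ℝ) T, ∀ x,
      deriv (fun t => U t x) s + ⟪r x, gradient (U s) x⟫
        - (1 / 2) * ⟪gradient (U s) x, matVec (q x) (gradient (U s) x)⟫ ≥ 0)
    (hterm : ∀ x, U T x ≤ h x)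
    (φ φ' : ℝ → EuclideanSpace ℝ (Fin m))
    (hφd : ∀ s ∈ Set.Icc t₀ T, HasDerivAt φ (φ' s) s)
    (hφ'c : ContinuousOn φ' (Set.Icc t₀ T))
    (hφ0 : φ t₀ = x₀) :
    (∫ s in t₀..T,
        ((1 / 2) * ⟪φ' s - r (φ s), matVec (q (φ s))⁻¹ (φ' s - r (φ s))⟫
          - ⟪φ' s - r (φ s), gradient (U s) (φ s)⟫
          - (1 / 2) * ⟪gradient (U s) (φ s), matVec (q (φ s)) (gradient (U s) (φ s))⟫))
      + 2 * h (φ T)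
    ≥ (1 / 2) * (∫ s in t₀..T,
        ⟪φ' s - r (φ s), matVec (q (φ s))⁻¹ (φ' s - r (φ s))⟫)
      + h (φ T) + U t₀ x₀ := by
  have htT : t₀ ≤ T := ht₀.2
  have hφc : ContinuousOn φ (Icc t₀ T) := fun s hs => (hφd s hs).continuousAt.continuousWithinAt
  have hq : Continuous q := continuous_matrix hqc
  have hdev : ContinuousOn (fun s => φ' s - r (φ s)) (Icc t₀ T) :=
    hφ'c.sub (hr.comp_continuousOn hφc)
  have hgrad : ContinuousOn (fun s => gradient (U s) (φ s)) (Icc t₀ T) :=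
    hU.continuous_gradient_uncurry.comp_continuousOn (continuousOn_id.prodMk hφc)
  have hcost : IntervalIntegrable
      (fun s => ⟪φ' s - r (φ s), matVec (q (φ s))⁻¹ (φ' s - r (φ s))⟫) volume t₀ T :=
    (hdev.inner (((hq.matrix_inv_of_det_ne_zero fun x => (hqpd x).det_pos.ne').comp_continuousOn
      hφc).matVec hdev)).intervalIntegrable_of_Icc htT
  have hcross : ContinuousOn (fun s => ⟪φ' s - r (φ s), gradient (U s) (φ s)⟫
      + (1 / 2) * ⟪gradient (U s) (φ s), matVec (q (φ s)) (gradient (U s) (φ s))⟫) (Icc t₀ T) :=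
    (hdev.inner hgrad).add (continuousOn_const.mul
      (hgrad.inner ((hq.comp_continuousOn hφc).matVec hgrad)))
  have hverif := integral_le_sub_of_le_deriv_uncurry_comp htT (hU.differentiable one_ne_zero)
    hφd hcross.integrableOn_Icc fun s hs => by
      have := hsub s ⟨ht₀.1.trans_lt hs.1, hs.2⟩ (φ s)
      rw [inner_sub_left, real_inner_comm (φ' s)]
      linarith
  have hsplit := intervalIntegral.integral_sub (hcost.const_mul (1 / 2))
    (hcross.intervalIntegrable_of_Icc htT)
  rw [intervalIntegral.integral_const_mul] at hsplit
  simp only [sub_add_eq_sub_sub] at hsplit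
  linarith [hterm (φ T), hφ0 ▸ hverif]

/-- The deterministic lower bound in the proof of asymptotic optimality of the Regime 1
importance sampling scheme: the limiting controlled cost is bounded below by
`S(φ) + h(φ(T)) + Ū(t₀, x₀)`, where `S` is the Regime 1 rate functional. -/
theorem stmt4 (m : ℕ) (hm : 0 < m) (T t₀ : ℝ) (hT : 0 < T) (ht₀ : t₀ ∈ Set.Icc 0 T)
    (x₀ : EuclideanSpace ℝ (Fin m))
    (r : EuclideanSpace ℝ (Fin m) → EuclideanSpace ℝ (Fin m)) (hr : Continuous r)
    (q : EuclideanSpace ℝ (Fin m) → Matrix (Fin m) (Fin m) ℝ)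
    (hqc : ∀ i j, Continuous fun x => q x i j) (hqpd : ∀ x, (q x).PosDef)
    (h : EuclideanSpace ℝ (Fin m) → ℝ)
    (U : ℝ → EuclideanSpace ℝ (Fin m) → ℝ)
    (hU : ContDiff ℝ 1 (fun sx : ℝ × EuclideanSpace ℝ (Fin m) => U sx.1 sx.2))
    (hsub : ∀ s ∈ Set.Ioo (0 : ℝ) T, ∀ x,
      deriv (fun t => U t x) s + ⟪r x, gradient (U s) x⟫
        - (1 / 2) * ⟪gradient (U s) x, matVec (q x) (gradient (U s) x)⟫ ≥ 0)
    (hterm : ∀ x, U T x ≤ h x)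
    (φ φ' : ℝ → EuclideanSpace ℝ (Fin m))
    (hφd : ∀ s ∈ Set.Icc t₀ T, HasDerivAt φ (φ' s) s)
    (hφ'c : ContinuousOn φ' (Set.Icc t₀ T))
    (hφ0 : φ t₀ = x₀) :
    (∫ s in t₀..T,
        ((1 / 2) * ⟪φ' s - r (φ s), matVec (q (φ s))⁻¹ (φ' s - r (φ s))⟫
          - ⟪φ' s - r (φ s), gradient (U s) (φ s)⟫
          - (1 / 2) * ⟪gradient (U s) (φ s), matVec (q (φ s)) (gradient (U s) (φ s))⟫))
      + 2 * h (φ T)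
    ≥ (1 / 2) * (∫ s in t₀..T,
        ⟪φ' s - r (φ s), matVec (q (φ s))⁻¹ (φ' s - r (φ s))⟫)
      + h (φ T) + U t₀ x₀ :=
  stmt4_general m T t₀ ht₀ x₀ r hr q hqc hqpd h U hU hsub hterm φ φ' hφd hφ'c hφ0
end

section
/- Let T > 0, M > 0, x₀ ∈ ℝ^m, and s₀ ≥ 0. Let r : ℝ^m → ℝ^m be measurable with ‖r(x)‖ ≤ M for all x, and let q : ℝ^m → ℝ^{m×m} be measurable with each q(x) symmetric positive definite satisfying ⟨ξ, q(x)⁻¹ ξ⟩ ≥ ‖ξ‖²/M for all ξ ∈ ℝ^m and x ∈ ℝ^m. Suppose φ : [0,T] → ℝ^m has the form φ(t) = x₀ + ∫₀^t g(s) ds for a locally integrable g : [0,T] → ℝ^m, and that (1/2)∫₀^T ⟨g(s) − r(φ(s)), q(φ(s))⁻¹ (g(s) − r(φ(s)))⟩ ds ≤ s₀. Then for all 0 ≤ t₁ ≤ t₂ ≤ T, ‖φ(t₂) − φ(t₁)‖ ≤ M (t₂ − t₁) + √(2 M s₀) · √(t₂ − t₁). -/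
/-! The increment `φ t₂ - φ t₁` is the integral of `g` over `[t₁, t₂]`. Splitting
`g = (g - r ∘ φ) + r ∘ φ`, the drift contributes at most `M (t₂ - t₁)`, and by Cauchy–Schwarz the
fluctuation contributes at most `‖g - r ∘ φ‖_{L²} √(t₂ - t₁)`, where the coercivity
`‖ξ‖² ≤ M ⟨ξ, q⁻¹ ξ⟩` bounds `‖g - r ∘ φ‖²_{L²}` by twice `M` times the action. Norms are taken in
`EuclideanSpace ℝ (Fin m)`, where `‖v‖ = √(v ⬝ᵥ v)`. -/

open MeasureTheory Matrix Set
open scoped ENNReal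

section CauchySchwarz

variable {α E : Type*} [MeasurableSpace α] [NormedAddCommGroup E] [NormedSpace ℝ E]
  {μ : Measure α} [IsFiniteMeasure μ]

theorem norm_integral_le_sqrt_mul_sqrt_measureReal {f : α → E} (hf : AEStronglyMeasurable f μ)
    {C : ℝ} (hC₀ : 0 ≤ C) (hC : ∫⁻ a, ENNReal.ofReal (‖f a‖ ^ 2) ∂μ ≤ ENNReal.ofReal C) :
    ‖∫ a, f a ∂μ‖ ≤ √C * √(μ.real univ) := by
  have hsq : ∀ a, ENNReal.ofReal ‖f a‖ ^ (2 : ℝ) = ENNReal.ofReal (‖f a‖ ^ 2) := fun a => by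
    rw [ENNReal.ofReal_rpow_of_nonneg (norm_nonneg _) zero_le_two, Real.rpow_two]
  have holder : ∫⁻ a, ENNReal.ofReal ‖f a‖ ∂μ
      ≤ (∫⁻ a, ENNReal.ofReal ‖f a‖ ^ (2 : ℝ) ∂μ) ^ (1 / 2 : ℝ) * μ univ ^ (1 / 2 : ℝ) := by
    simpa using ENNReal.lintegral_mul_le_Lp_mul_Lq μ Real.HolderConjugate.two_two
      hf.norm.aemeasurable.ennreal_ofReal (aemeasurable_const (b := (1 : ℝ≥0∞)))
  calc ‖∫ a, f a ∂μ‖ ≤ (∫⁻ a, ENNReal.ofReal ‖f a‖ ∂μ).toReal := norm_integral_le_lintegral_norm f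
    _ ≤ (ENNReal.ofReal C ^ (1 / 2 : ℝ) * μ univ ^ (1 / 2 : ℝ)).toReal := by
      refine ENNReal.toReal_mono (by finiteness) (holder.trans ?_)
      simp_rw [hsq]
      gcongr
    _ = √C * √(μ.real univ) := by
      rw [ENNReal.toReal_mul, ← ENNReal.toReal_rpow, ← ENNReal.toReal_rpow,
        ENNReal.toReal_ofReal hC₀, Real.sqrt_eq_rpow, Real.sqrt_eq_rpow, measureReal_def]

theorem norm_integral_le_of_norm_le_of_lintegral_sq_sub_le {f b : α → E} (hf : Integrable f μ)
    (hb : AEStronglyMeasurable b μ) {M C : ℝ} (hbM : ∀ᵐ a ∂μ, ‖b a‖ ≤ M) (hC₀ : 0 ≤ C)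
    (hC : ∫⁻ a, ENNReal.ofReal (‖f a - b a‖ ^ 2) ∂μ ≤ ENNReal.ofReal C) :
    ‖∫ a, f a ∂μ‖ ≤ M * μ.real univ + √C * √(μ.real univ) := by
  have hbi : Integrable b μ := Integrable.of_bound hb M hbM
  have hsplit : ∫ a, f a ∂μ = ∫ a, (f a - b a) ∂μ + ∫ a, b a ∂μ := by
    rw [integral_sub hf hbi, sub_add_cancel]
  calc ‖∫ a, f a ∂μ‖ ≤ ‖∫ a, (f a - b a) ∂μ‖ + ‖∫ a, b a ∂μ‖ := hsplit ▸ norm_add_le _ _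
    _ ≤ √C * √(μ.real univ) + M * μ.real univ := by
      gcongr
      · exact norm_integral_le_sqrt_mul_sqrt_measureReal (hf.sub hbi).aestronglyMeasurable hC₀ hC
      · exact norm_integral_le_of_norm_le_const hbM
    _ = M * μ.real univ + √C * √(μ.real univ) := add_comm _ _

end CauchySchwarz

theorem EuclideanSpace.norm_equiv_symm_sq {ι : Type*} [Fintype ι] (v : ι → ℝ) :
    ‖(EuclideanSpace.equiv ι ℝ).symm v‖ ^ 2 = v ⬝ᵥ v := by
  rw [EuclideanSpace.real_norm_sq_eq]
  simp [dotProduct, sq]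

theorem EuclideanSpace.norm_equiv_symm {ι : Type*} [Fintype ι] (v : ι → ℝ) :
    ‖(EuclideanSpace.equiv ι ℝ).symm v‖ = √(v ⬝ᵥ v) := by
  rw [← EuclideanSpace.norm_equiv_symm_sq, Real.sqrt_sq (norm_nonneg _)]

theorem lintegral_dotProduct_self_le_of_action {α ι : Type*} [MeasurableSpace α] [Fintype ι]
    {μ : Measure α} {h : α → ι → ℝ} {Q : α → Matrix ι ι ℝ} {M s₀ : ℝ} (hM : 0 < M)
    (hQ : ∀ a, h a ⬝ᵥ h a / M ≤ h a ⬝ᵥ (Q a *ᵥ h a))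
    (hS : (1 / 2 : ℝ≥0∞) * ∫⁻ a, ENNReal.ofReal (h a ⬝ᵥ (Q a *ᵥ h a)) ∂μ ≤ ENNReal.ofReal s₀) :
    ∫⁻ a, ENNReal.ofReal (h a ⬝ᵥ h a) ∂μ ≤ ENNReal.ofReal (2 * M * s₀) := by
  have hS' : ∫⁻ a, ENNReal.ofReal (h a ⬝ᵥ (Q a *ᵥ h a)) ∂μ ≤ 2 * ENNReal.ofReal s₀ := by
    rwa [one_div, ENNReal.inv_mul_le_iff two_ne_zero ENNReal.ofNat_ne_top] at hS
  calc ∫⁻ a, ENNReal.ofReal (h a ⬝ᵥ h a) ∂μ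
      ≤ ∫⁻ a, ENNReal.ofReal M * ENNReal.ofReal (h a ⬝ᵥ (Q a *ᵥ h a)) ∂μ := by
        refine lintegral_mono fun a => ?_
        rw [← ENNReal.ofReal_mul hM.le]
        exact ENNReal.ofReal_le_ofReal ((div_le_iff₀' hM).1 (hQ a))
    _ = ENNReal.ofReal M * ∫⁻ a, ENNReal.ofReal (h a ⬝ᵥ (Q a *ᵥ h a)) ∂μ :=
        lintegral_const_mul' _ _ ENNReal.ofReal_ne_top
    _ ≤ ENNReal.ofReal M * (2 * ENNReal.ofReal s₀) := by gcongr
    _ = ENNReal.ofReal (2 * M * s₀) := by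
        rw [ENNReal.ofReal_mul (by positivity), ENNReal.ofReal_mul zero_le_two,
          ENNReal.ofReal_ofNat]
        ring

theorem intervalIntegral_sub_intervalIntegral_eq_setIntegral_Icc {E : Type*}
    [NormedAddCommGroup E] [NormedSpace ℝ E] {g : ℝ → E} {a b t₁ t₂ : ℝ}
    (hg : IntegrableOn g (Icc a b)) (ht₁ : a ≤ t₁) (ht₁₂ : t₁ ≤ t₂) (ht₂ : t₂ ≤ b) :
    (∫ s in a..t₂, g s) - ∫ s in a..t₁, g s = ∫ s in Icc t₁ t₂, g s := by
  have hint : ∀ t, a ≤ t → t ≤ b → IntervalIntegrable g volume a t := fun t hat htb =>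
    (intervalIntegrable_iff_integrableOn_Icc_of_le hat).2 (hg.mono_set (Icc_subset_Icc le_rfl htb))
  rw [intervalIntegral.integral_interval_sub_left (hint t₂ (ht₁.trans ht₁₂) ht₂)
      (hint t₁ ht₁ (ht₁₂.trans ht₂)), intervalIntegral.integral_of_le ht₁₂,
    integral_Icc_eq_integral_Ioc]

theorem continuousOn_Icc_of_eq_add_intervalIntegral {E : Type*} [NormedAddCommGroup E]
    [NormedSpace ℝ E] {φ g : ℝ → E} {x₀ : E} {a b : ℝ} (hφ : ∀ t, φ t = x₀ + ∫ s in a..t, g s)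
    (hab : a ≤ b) (hg : IntegrableOn g (Icc a b)) : ContinuousOn φ (Icc a b) := by
  rw [show φ = fun t => x₀ + ∫ s in a..t, g s from funext hφ, ← uIcc_of_le hab]
  exact continuousOn_const.add
    (intervalIntegral.continuousOn_primitive_interval (by rwa [uIcc_of_le hab]))

theorem stmt15_general (m : ℕ) (T M s₀ : ℝ) (hM : 0 < M) (hs₀ : 0 ≤ s₀)
    (x₀ : Fin m → ℝ)
    (r : (Fin m → ℝ) → (Fin m → ℝ)) (hrmeas : ∀ i, Measurable fun x => r x i)
    (hrbd : ∀ x, r x ⬝ᵥ r x ≤ M ^ 2)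
    (q : (Fin m → ℝ) → Matrix (Fin m) (Fin m) ℝ)
    (hqlb : ∀ x (ξ : Fin m → ℝ), (ξ ⬝ᵥ ξ) / M ≤ ξ ⬝ᵥ ((q x)⁻¹ *ᵥ ξ))
    (g : ℝ → Fin m → ℝ) (hg : IntegrableOn g (Set.Icc 0 T))
    (φ : ℝ → Fin m → ℝ) (hφ : ∀ t, φ t = x₀ + ∫ s in (0:ℝ)..t, g s)
    (haction : (1 / 2 : ℝ≥0∞) * ∫⁻ s in Set.Icc (0:ℝ) T,
        ENNReal.ofReal ((g s - r (φ s)) ⬝ᵥ ((q (φ s))⁻¹ *ᵥ (g s - r (φ s))))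
      ≤ ENNReal.ofReal s₀) :
    ∀ t₁ t₂ : ℝ, 0 ≤ t₁ → t₁ ≤ t₂ → t₂ ≤ T →
      Real.sqrt ((φ t₂ - φ t₁) ⬝ᵥ (φ t₂ - φ t₁))
        ≤ M * (t₂ - t₁) + Real.sqrt (2 * M * s₀) * Real.sqrt (t₂ - t₁) := by
  intro t₁ t₂ ht₁ ht₁₂ ht₂
  set e := (EuclideanSpace.equiv (Fin m) ℝ).symm
  have hsub : Icc t₁ t₂ ⊆ Icc 0 T := Icc_subset_Icc ht₁ ht₂
  have hφ_cont : ContinuousOn φ (Icc t₁ t₂) :=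
    (continuousOn_Icc_of_eq_add_intervalIntegral hφ (ht₁.trans (ht₁₂.trans ht₂)) hg).mono hsub
  have hrφ_meas : AEStronglyMeasurable (fun s => e (r (φ s))) (volume.restrict (Icc t₁ t₂)) :=
    e.continuous.comp_aestronglyMeasurable ((measurable_pi_iff.2 hrmeas).comp_aemeasurable
      (hφ_cont.aemeasurable measurableSet_Icc)).aestronglyMeasurable
  have hr_le : ∀ x, ‖e (r x)‖ ≤ M := fun x => by
    rw [EuclideanSpace.norm_equiv_symm]
    exact Real.sqrt_le_iff.2 ⟨hM.le, hrbd x⟩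
  have hL2 : ∫⁻ s in Icc t₁ t₂, ENNReal.ofReal (‖e (g s) - e (r (φ s))‖ ^ 2)
      ≤ ENNReal.ofReal (2 * M * s₀) := by
    simp only [e, ← map_sub, EuclideanSpace.norm_equiv_symm_sq]
    exact (lintegral_mono_set hsub).trans
      (lintegral_dotProduct_self_le_of_action hM (fun s => hqlb _ _) haction)
  have hincr : φ t₂ - φ t₁ = ∫ s in Icc t₁ t₂, g s := by
    rw [hφ, hφ, add_sub_add_left_eq_sub,
      intervalIntegral_sub_intervalIntegral_eq_setIntegral_Icc hg ht₁ ht₁₂ ht₂]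
  rw [← EuclideanSpace.norm_equiv_symm, hincr, ← e.integral_comp_comm]
  simpa [Real.volume_real_Icc_of_le ht₁₂] using
    norm_integral_le_of_norm_le_of_lintegral_sq_sub_le (e.integrable_comp_iff.2 (hg.mono_set hsub))
      hrφ_meas (ae_of_all _ fun s => hr_le _) (by positivity) hL2

/-- Uniform Hölder-1/2 equicontinuity on sublevel sets of the Regime 1 action functional:
if `φ(t) = x₀ + ∫₀ᵗ g(s) ds` and `(1/2)∫₀^T ⟨g − r(φ), q(φ)⁻¹(g − r(φ))⟩ ds ≤ s₀`, with
`‖r‖ ≤ M` and `⟨ξ, q(x)⁻¹ξ⟩ ≥ ‖ξ‖²/M`, then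
`‖φ(t₂) − φ(t₁)‖ ≤ M(t₂ − t₁) + √(2Ms₀)·√(t₂ − t₁)`. -/
theorem stmt15 (m : ℕ) (hm : 0 < m) (T M s₀ : ℝ) (hT : 0 < T) (hM : 0 < M) (hs₀ : 0 ≤ s₀)
    (x₀ : Fin m → ℝ)
    (r : (Fin m → ℝ) → (Fin m → ℝ)) (hrmeas : ∀ i, Measurable fun x => r x i)
    (hrbd : ∀ x, r x ⬝ᵥ r x ≤ M ^ 2)
    (q : (Fin m → ℝ) → Matrix (Fin m) (Fin m) ℝ)
    (hqmeas : ∀ i j, Measurable fun x => q x i j)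
    (hqpd : ∀ x, (q x).PosDef)
    (hqlb : ∀ x (ξ : Fin m → ℝ), (ξ ⬝ᵥ ξ) / M ≤ ξ ⬝ᵥ ((q x)⁻¹ *ᵥ ξ))
    (g : ℝ → Fin m → ℝ) (hg : IntegrableOn g (Set.Icc 0 T))
    (φ : ℝ → Fin m → ℝ) (hφ : ∀ t, φ t = x₀ + ∫ s in (0:ℝ)..t, g s)
    (haction : (1 / 2 : ℝ≥0∞) * ∫⁻ s in Set.Icc (0:ℝ) T,
        ENNReal.ofReal ((g s - r (φ s)) ⬝ᵥ ((q (φ s))⁻¹ *ᵥ (g s - r (φ s))))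
      ≤ ENNReal.ofReal s₀) :
    ∀ t₁ t₂ : ℝ, 0 ≤ t₁ → t₁ ≤ t₂ → t₂ ≤ T →
      Real.sqrt ((φ t₂ - φ t₁) ⬝ᵥ (φ t₂ - φ t₁))
        ≤ M * (t₂ - t₁) + Real.sqrt (2 * M * s₀) * Real.sqrt (t₂ - t₁) :=
  stmt15_general m T M s₀ hM hs₀ x₀ r hrmeas hrbd q hqlb g hg φ hφ haction
end
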